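/- arXiv:1209.3378 — 2 statements merged into one kernel-verified Lean document; each statement's English description precedes it below -/
import Mathlib

section
/- The function x ↦ 2·√x·artanh(√x) is convex on the interval [0,1). -/
/-!
Expanding artanh in its Taylor series, `2 √x artanh √x = ∑_{k ≥ 0} 2/(2k+1) · x^(k+1)` on `[0,1)`.
Every term is a nonnegative multiple of a power of `x`, hence convex on `[0,∞)`, and a pointwise
limit of convex functions (here, the partial sums) is convex.
-/

noncomputable def artanh (x : ℝ) : ℝ := (1 / 2) * Real.log ((1 + x) / (1 - x))

open Filter Set Topology

section

variable {E ι : Type*} [AddCommGroup E] [Module ℝ E] {s : Set E}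

theorem ConvexOn.of_tendsto {l : Filter ι} [l.NeBot] {g : ι → E → ℝ} {f : E → ℝ}
    (hs : Convex ℝ s) (hg : ∀ i, ConvexOn ℝ s (g i))
    (hlim : ∀ x ∈ s, Tendsto (fun i => g i x) l (𝓝 (f x))) : ConvexOn ℝ s f :=
  ⟨hs, fun x hx y hy a b ha hb hab =>
    le_of_tendsto_of_tendsto' (hlim _ (hs hx hy ha hb hab))
      (((hlim x hx).const_mul a).add ((hlim y hy).const_mul b))
      fun i => (hg i).2 hx hy ha hb hab⟩

theorem ConvexOn.sum {g : ι → E → ℝ} (t : Finset ι) (hs : Convex ℝ s)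
    (hg : ∀ i ∈ t, ConvexOn ℝ s (g i)) : ConvexOn ℝ s (∑ i ∈ t, g i) :=
  Finset.sum_induction g (ConvexOn ℝ s) (fun _ _ => ConvexOn.add) (convexOn_const 0 hs) hg

theorem ConvexOn.of_hasSum {g : ι → E → ℝ} {f : E → ℝ} (hs : Convex ℝ s)
    (hg : ∀ i, ConvexOn ℝ s (g i)) (hsum : ∀ x ∈ s, HasSum (fun i => g i x) (f x)) :
    ConvexOn ℝ s f :=
  ConvexOn.of_tendsto (l := atTop) hs (fun t => ConvexOn.sum t hs fun i _ => hg i) fun x hx => by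
    have h : Tendsto (fun t : Finset ι => ∑ i ∈ t, g i x) atTop (𝓝 (f x)) := hsum x hx
    simpa only [Finset.sum_apply] using h

end

theorem two_mul_artanh_eq_log_sub_log {y : ℝ} (hy : |y| < 1) :
    2 * artanh y = Real.log (1 + y) - Real.log (1 - y) := by
  obtain ⟨hlo, hhi⟩ := abs_lt.1 hy
  rw [artanh, Real.log_div (by linarith) (by linarith)]
  ring

theorem hasSum_artanh {y : ℝ} (hy : |y| < 1) :
    HasSum (fun k : ℕ => 2 / (2 * k + 1) * y ^ (2 * k + 1)) (2 * artanh y) := by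
  simpa only [two_mul_artanh_eq_log_sub_log hy, mul_one_div] using
    Real.hasSum_log_sub_log_of_abs_lt_one hy

theorem hasSum_two_mul_sqrt_mul_artanh_sqrt {x : ℝ} (hx : x ∈ Ico (0 : ℝ) 1) :
    HasSum (fun k : ℕ => 2 / (2 * k + 1) * x ^ (k + 1)) (2 * √x * artanh √x) := by
  have hy : |√x| < 1 := by
    simpa [abs_of_nonneg (Real.sqrt_nonneg x)] using Real.sqrt_lt_sqrt hx.1 hx.2
  have hterm (k : ℕ) :
      √x * (2 / (2 * k + 1) * √x ^ (2 * k + 1)) = 2 / (2 * k + 1) * x ^ (k + 1) := by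
    rw [mul_left_comm, ← pow_succ', show 2 * k + 1 + 1 = 2 * (k + 1) by ring, pow_mul,
      Real.sq_sqrt hx.1]
  rw [mul_assoc]
  simpa only [hterm, mul_left_comm √x] using (hasSum_artanh hy).mul_left √x

/-- The function `x ↦ 2 √x artanh √x` is convex on `[0,1)`. -/
theorem convexOn_sqrt_artanh_sqrt :
    ConvexOn ℝ (Set.Ico (0 : ℝ) 1)
      (fun x : ℝ => 2 * Real.sqrt x * artanh (Real.sqrt x)) := by
  refine ConvexOn.of_hasSum (convex_Ico 0 1) (fun k => ?_) fun x hx =>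
    hasSum_two_mul_sqrt_mul_artanh_sqrt hx
  have hcoeff : (0 : ℝ) ≤ 2 / (2 * k + 1) := by positivity
  exact ((convexOn_pow (k + 1)).subset Ico_subset_Ici_self (convex_Ico 0 1)).smul hcoeff
end

section
/- The function A(x) = 2x·artanh(x) + 4·√(1−x²) − 4 is nonnegative and monotone increasing on the interval [0,1). -/
lemma artanh_zero : artanh 0 = 0 := by simp [artanh]

lemma hasDerivAt_artanh {x : ℝ} (h₁ : -1 < x) (h₂ : x < 1) :
    HasDerivAt artanh (1 - x ^ 2)⁻¹ x := by
  have hp : 1 + x ≠ 0 := by linarith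
  have hm : 1 - x ≠ 0 := by linarith
  have hq : HasDerivAt (fun y : ℝ => (1 + y) / (1 - y)) (2 / (1 - x) ^ 2) x := by
    refine (((hasDerivAt_id x).const_add 1).div ((hasDerivAt_id x).const_sub 1) hm).congr_deriv ?_
    simp only [id_eq]
    ring
  refine ((hq.log (div_ne_zero hp hm)).const_mul (1 / 2 : ℝ)).congr_deriv ?_
  rw [show 1 - x ^ 2 = (1 + x) * (1 - x) by ring]
  field_simp

lemma self_le_artanh {x : ℝ} (h₀ : 0 ≤ x) (h₁ : x < 1) : x ≤ artanh x := by
  have hseries := Real.hasSum_log_sub_log_of_abs_lt_one (abs_lt.2 ⟨by linarith, h₁⟩)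
  have hlog : Real.log ((1 + x) / (1 - x)) = Real.log (1 + x) - Real.log (1 - x) :=
    Real.log_div (by linarith) (by linarith)
  have hfirst := le_hasSum hseries 0 fun k _ => by positivity
  simp only [artanh, hlog]
  norm_num at hfirst
  linarith

noncomputable def ledrappierGain (x : ℝ) : ℝ := 2 * x * artanh x + 4 * Real.sqrt (1 - x ^ 2) - 4

lemma ledrappierGain_zero : ledrappierGain 0 = 0 := by simp [ledrappierGain, artanh_zero]

lemma hasDerivAt_ledrappierGain {x : ℝ} (h₁ : -1 < x) (h₂ : x < 1) :
    HasDerivAt ledrappierGain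
      (2 * artanh x + 2 * x / (1 - x ^ 2) - 4 * x / Real.sqrt (1 - x ^ 2)) x := by
  have hpos : 0 < 1 - x ^ 2 := by nlinarith
  have hsqrt :
      HasDerivAt (fun y : ℝ => Real.sqrt (1 - y ^ 2)) (-x / Real.sqrt (1 - x ^ 2)) x := by
    refine (((hasDerivAt_pow 2 x).const_sub 1).sqrt hpos.ne').congr_deriv ?_
    field_simp
    ring
  have hprod := ((hasDerivAt_id x).const_mul 2).mul (hasDerivAt_artanh h₁ h₂)
  refine ((hprod.add (hsqrt.const_mul 4)).sub_const 4).congr_deriv ?_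
  simp only [id_eq]
  ring

lemma deriv_ledrappierGain_nonneg {x : ℝ} (h₀ : 0 ≤ x) (h₁ : x < 1) :
    0 ≤ 2 * artanh x + 2 * x / (1 - x ^ 2) - 4 * x / Real.sqrt (1 - x ^ 2) := by
  set t := Real.sqrt (1 - x ^ 2)
  have ht : 0 < t := Real.sqrt_pos.2 (by nlinarith)
  have ht2 : t ^ 2 = 1 - x ^ 2 := Real.sq_sqrt (by nlinarith)
  have hsq : 2 * x + 2 * x / (1 - x ^ 2) - 4 * x / t = 2 * x * (1 - t⁻¹) ^ 2 := by
    rw [← ht2]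
    field_simp
    ring
  have hsq_nonneg : 0 ≤ 2 * x * (1 - t⁻¹) ^ 2 := by positivity
  linarith [self_le_artanh h₀ h₁]

lemma monotoneOn_ledrappierGain : MonotoneOn ledrappierGain (Set.Ico 0 1) := by
  have hderiv (x : ℝ) (hx : x ∈ Set.Ico (0 : ℝ) 1) :=
    hasDerivAt_ledrappierGain (by linarith [hx.1]) hx.2
  refine monotoneOn_of_hasDerivWithinAt_nonneg (convex_Ico 0 1)
    (f' := fun x => 2 * artanh x + 2 * x / (1 - x ^ 2) - 4 * x / Real.sqrt (1 - x ^ 2))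
    (fun x hx => (hderiv x hx).continuousAt.continuousWithinAt) (fun x hx => ?_) (fun x hx => ?_)
  all_goals rw [interior_Ico] at hx
  · exact (hderiv x (Set.Ioo_subset_Ico_self hx)).hasDerivWithinAt
  · exact deriv_ledrappierGain_nonneg hx.1.le hx.2

/-- The function `A(x) = 2x artanh x + 4 √(1-x²) - 4` is nonnegative
and monotone increasing on `[0,1)`. -/
theorem nonneg_and_monotoneOn_ledrappier_gain :
    (∀ x ∈ Set.Ico (0 : ℝ) 1,
        0 ≤ 2 * x * artanh x + 4 * Real.sqrt (1 - x ^ 2) - 4) ∧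
      MonotoneOn (fun x : ℝ => 2 * x * artanh x + 4 * Real.sqrt (1 - x ^ 2) - 4)
        (Set.Ico (0 : ℝ) 1) := by
  refine ⟨fun x hx => ?_, monotoneOn_ledrappierGain⟩
  have hmono := monotoneOn_ledrappierGain ⟨le_rfl, one_pos⟩ hx hx.1
  rwa [ledrappierGain_zero] at hmono
end
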